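/- arXiv:2509.10693 — 4 statements merged into one kernel-verified Lean document; each statement's English description precedes it below -/
import Mathlib

section
/- Let N ≥ 1, let x_1, …, x_N ∈ ℝ^d be distinct or not, and let C ∈ ℝ^{N×N} be the Euclidean ground cost matrix C_{ij} := ‖x_i − x_j‖₂² (so C is symmetric with nonnegative entries). Fix r ∈ ℝ^N, a step size h > 0, and a regularization parameter ε > 0. Define entrywise K := exp(−C/(2ε)), e := exp(−h r/ε), q_j := μ_j / (K e)_j for a given μ ∈ Δ^{N−1}, μ⁺ := e ⊙ (Kᵀ q), and M*_{ij} := e_i K_{ij} q_j. Then for every ν ∈ Δ^{N−1} and every M ∈ Π_N(ν, μ), one has E_ε(M) + h ⟨r, ν⟩ ≥ E_ε(M*) + h ⟨r, μ⁺⟩. Consequently, μ⁺ = exp(−h r/ε) ⊙ ( Kᵀ ( μ ⊘ (K exp(−h r/ε)) ) ) is a minimizer over Δ^{N−1} of the entropy-regularized Wasserstein proximal objective ν ↦ ( min_{M ∈ Π_N(ν, μ)} E_ε(M) ) + h ⟨r, ν⟩. -/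
open scoped BigOperators

/-- The transport polytope `Π_N(p,q)`: nonnegative `N×N` matrices with row sums
`p` and column sums `q`. -/
def transportPolytope {N : ℕ} (p q : Fin N → ℝ) :
    Set (Matrix (Fin N) (Fin N) ℝ) :=
  {M | (∀ i j, 0 ≤ M i j) ∧ (∀ i, ∑ j, M i j = p i) ∧ (∀ j, ∑ i, M i j = q j)}

/-- The entropic optimal transport objective
`E_ε(M) = Σ_{i,j} ((1/2) C_{ij} M_{ij} + ε M_{ij} log M_{ij})`
(with the convention `0 log 0 = 0`, which holds since `Real.log 0 = 0`). -/
noncomputable def entropicCost {N : ℕ} (ε : ℝ)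
    (C M : Matrix (Fin N) (Fin N) ℝ) : ℝ :=
  ∑ i, ∑ j, ((1 / 2) * C i j * M i j + ε * M i j * Real.log (M i j))


private lemma mul_log_key {s t : ℝ} (hs : 0 < s) (ht : 0 ≤ t) :
    t * Real.log s + t - s ≤ t * Real.log t := by
  rcases eq_or_lt_of_le ht with hrfl | hpos
  · simp [← hrfl]; linarith
  · have h1 : Real.log (s / t) ≤ s / t - 1 := Real.log_le_sub_one_of_pos (by positivity)
    rw [Real.log_div hs.ne' hpos.ne'] at h1
    have h2 : t * (s / t) = s := by field_simp
    nlinarith [mul_le_mul_of_nonneg_left h1 ht]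

private lemma entry_ineq (a lam ε s t : ℝ) (hε : 0 < ε) (hs : 0 < s) (ht : 0 ≤ t)
    (hlog : ε * Real.log s = lam - a) :
    a * s + ε * s * Real.log s + (lam + ε) * (t - s) ≤ a * t + ε * t * Real.log t := by
  have k := mul_log_key hs ht
  have k2 : ε * (t * Real.log s + t - s) ≤ ε * (t * Real.log t) :=
    mul_le_mul_of_nonneg_left k hε.le
  have h1 : ε * (t * Real.log s) = t * (lam - a) := by
    rw [show ε * (t * Real.log s) = t * (ε * Real.log s) by ring, hlog]
  have h2 : ε * (s * Real.log s) = s * (lam - a) := by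
    rw [show ε * (s * Real.log s) = s * (ε * Real.log s) by ring, hlog]
  nlinarith [k2, h1, h2]

/-- **Closed form of the entropy-regularized Wasserstein proximal update for a
linear energy (Theorem 2 of the paper).**
Let `C_{ij} := ‖x_i − x_j‖₂²` be the Euclidean ground cost, `r ∈ ℝ^N`, `h > 0`,
`ε > 0`, `K := exp(−C/(2ε))`, `e := exp(−h r/ε)`, and, for `μ` in the simplex,
`q_j := μ_j/(K e)_j`, `μ⁺ := e ⊙ (Kᵀ q)`, `M*_{ij} := e_i K_{ij} q_j`.
Then `μ⁺` lies in the simplex, `M* ∈ Π_N(μ⁺, μ)`, for every `ν` in the simplex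
and every `M ∈ Π_N(ν, μ)` one has
`E_ε(M) + h⟨r,ν⟩ ≥ E_ε(M*) + h⟨r,μ⁺⟩`, and consequently `μ⁺` minimizes over the
simplex the objective `ν ↦ (inf_{M ∈ Π_N(ν,μ)} E_ε(M)) + h⟨r,ν⟩`. -/
theorem wassersteinProx_linear_closedForm {N d : ℕ} (hN : 1 ≤ N)
    (x : Fin N → EuclideanSpace ℝ (Fin d))
    (C : Matrix (Fin N) (Fin N) ℝ) (hC : C = fun i j => ‖x i - x j‖ ^ 2)
    (r : Fin N → ℝ) (h ε : ℝ) (hh : 0 < h) (hε : 0 < ε)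
    (K : Matrix (Fin N) (Fin N) ℝ)
    (hK : K = fun i j => Real.exp (-C i j / (2 * ε)))
    (e : Fin N → ℝ) (he : e = fun i => Real.exp (-h * r i / ε))
    (μ : Fin N → ℝ) (hμ : μ ∈ stdSimplex ℝ (Fin N))
    (q : Fin N → ℝ) (hq : q = fun j => μ j / K.mulVec e j)
    (μplus : Fin N → ℝ) (hμplus : μplus = fun i => e i * K.transpose.mulVec q i)
    (Mstar : Matrix (Fin N) (Fin N) ℝ)
    (hMstar : Mstar = fun i j => e i * K i j * q j) :
    μplus ∈ stdSimplex ℝ (Fin N) ∧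
    Mstar ∈ transportPolytope μplus μ ∧
    (∀ ν ∈ stdSimplex ℝ (Fin N), ∀ M ∈ transportPolytope ν μ,
      entropicCost ε C Mstar + h * ∑ i, r i * μplus i ≤
        entropicCost ε C M + h * ∑ i, r i * ν i) ∧
    (∀ ν ∈ stdSimplex ℝ (Fin N),
      sInf (entropicCost ε C '' transportPolytope μplus μ) +
          h * ∑ i, r i * μplus i ≤
        sInf (entropicCost ε C '' transportPolytope ν μ) +
          h * ∑ i, r i * ν i) := by
  haveI : Nonempty (Fin N) := Fin.pos_iff_nonempty.mp hN
  have hCsymm : ∀ i j, C i j = C j i := by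
    intro i j; rw [hC]; simp [norm_sub_rev]
  have hKsym : ∀ i j, K i j = K j i := by
    intro i j; simp only [hK]; rw [hCsymm i j]
  have hKpos : ∀ i j, 0 < K i j := by
    intro i j; simp only [hK]; exact Real.exp_pos _
  have hepos : ∀ i, 0 < e i := by
    intro i; simp only [he]; exact Real.exp_pos _
  have hZpos : ∀ j, 0 < K.mulVec e j := by
    intro j
    simp only [Matrix.mulVec, dotProduct]
    exact Finset.sum_pos (fun k _ => mul_pos (hKpos j k) (hepos k)) Finset.univ_nonempty
  have hqnn : ∀ j, 0 ≤ q j := by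
    intro j; simp only [hq]; exact div_nonneg (hμ.1 j) (hZpos j).le
  have hqmul : ∀ j, q j * K.mulVec e j = μ j := by
    intro j; simp only [hq]; rw [div_mul_cancel₀ _ (hZpos j).ne']
  have hMsnn : ∀ i j, 0 ≤ Mstar i j := by
    intro i j; simp only [hMstar]
    exact mul_nonneg (mul_nonneg (hepos i).le (hKpos i j).le) (hqnn j)
  have colsum : ∀ j, ∑ i, Mstar i j = μ j := by
    intro j
    simp only [hMstar]
    have e1 : ∑ i, e i * K i j * q j = (∑ i, K j i * e i) * q j := by
      rw [Finset.sum_mul]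
      refine Finset.sum_congr rfl fun i _ => ?_
      rw [hKsym i j]; ring
    have e2 : ∑ i, K j i * e i = K.mulVec e j := by
      simp [Matrix.mulVec, dotProduct]
    rw [e1, e2, mul_comm]; exact hqmul j
  have rowsum : ∀ i, ∑ j, Mstar i j = μplus i := by
    intro i
    simp only [hMstar, hμplus]
    have e1 : K.transpose.mulVec q i = ∑ j, K j i * q j := by
      simp [Matrix.mulVec, dotProduct, Matrix.transpose_apply]
    rw [e1, Finset.mul_sum]
    refine Finset.sum_congr rfl fun j _ => ?_
    rw [hKsym j i]; ring
  have claim1 : μplus ∈ stdSimplex ℝ (Fin N) := by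
    constructor
    · intro i
      rw [← rowsum i]
      exact Finset.sum_nonneg fun j _ => hMsnn i j
    · calc ∑ i, μplus i = ∑ i, ∑ j, Mstar i j := by
            exact Finset.sum_congr rfl fun i _ => (rowsum i).symm
        _ = ∑ j, ∑ i, Mstar i j := Finset.sum_comm
        _ = ∑ j, μ j := Finset.sum_congr rfl fun j _ => colsum j
        _ = 1 := hμ.2
  have claim2 : Mstar ∈ transportPolytope μplus μ := ⟨hMsnn, rowsum, colsum⟩
  have expand : ∀ (ν' : Fin N → ℝ) (M' : Matrix (Fin N) (Fin N) ℝ),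
      (∀ i, ∑ j, M' i j = ν' i) →
      entropicCost ε C M' + h * ∑ i, r i * ν' i
        = ∑ j, ∑ i, ((1 / 2) * C i j * M' i j + ε * M' i j * Real.log (M' i j)
            + h * r i * M' i j) := by
    intro ν' M' hrow
    have e2 : h * ∑ i, r i * ν' i = ∑ j, ∑ i, h * r i * M' i j := by
      rw [Finset.sum_comm, Finset.mul_sum]
      refine Finset.sum_congr rfl fun i _ => ?_
      rw [← hrow i, Finset.mul_sum, Finset.mul_sum]
      exact Finset.sum_congr rfl fun j _ => by ring
    rw [e2]
    unfold entropicCost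
    rw [Finset.sum_comm (f := fun i j => (1 / 2) * C i j * M' i j + ε * M' i j * Real.log (M' i j)),
      ← Finset.sum_add_distrib]
    refine Finset.sum_congr rfl fun j _ => ?_
    rw [← Finset.sum_add_distrib]
  have key3 : ∀ ν ∈ stdSimplex ℝ (Fin N), ∀ M ∈ transportPolytope ν μ,
      entropicCost ε C Mstar + h * ∑ i, r i * μplus i ≤
        entropicCost ε C M + h * ∑ i, r i * ν i := by
    intro ν hν M hM
    obtain ⟨hMnn, hMrow, hMcol⟩ := hM
    rw [expand μplus Mstar rowsum, expand ν M hMrow]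
    refine Finset.sum_le_sum fun j _ => ?_
    by_cases hj : μ j = 0
    · have hq0 : q j = 0 := by simp only [hq]; rw [hj, zero_div]
      have hM0 : ∀ i, M i j = 0 := fun i =>
        (Finset.sum_eq_zero_iff_of_nonneg (fun i _ => hMnn i j)).mp
          (by rw [hMcol j, hj]) i (Finset.mem_univ i)
      have hS0 : ∀ i, Mstar i j = 0 := by
        intro i; simp only [hMstar]; rw [hq0, mul_zero]
      refine le_of_eq ?_
      refine Finset.sum_congr rfl fun i _ => ?_
      rw [hM0 i, hS0 i]
    · have hμj : 0 < μ j := lt_of_le_of_ne (hμ.1 j) (Ne.symm hj)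
      have hqpos : 0 < q j := by
        simp only [hq]; exact div_pos hμj (hZpos j)
      set lam := ε * Real.log (μ j / K.mulVec e j) with hlam
      have hper : ∀ i,
          ((1 / 2) * C i j * Mstar i j + ε * Mstar i j * Real.log (Mstar i j)
              + h * r i * Mstar i j)
            + (lam + ε) * (M i j - Mstar i j)
          ≤ (1 / 2) * C i j * M i j + ε * M i j * Real.log (M i j)
              + h * r i * M i j := by
        intro i
        have hsval : Mstar i j = e i * K i j * q j := by simp only [hMstar]
        have hs : 0 < Mstar i j := by
          rw [hsval]; exact mul_pos (mul_pos (hepos i) (hKpos i j)) hqpos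
        have hlog_e : Real.log (e i) = -h * r i / ε := by
          simp only [he]; exact Real.log_exp _
        have hlog_K : Real.log (K i j) = -C i j / (2 * ε) := by
          simp only [hK]; exact Real.log_exp _
        have hlog_q : Real.log (q j) = Real.log (μ j / K.mulVec e j) := by
          simp only [hq]
        have hlogs : ε * Real.log (Mstar i j) = lam - ((1 / 2) * C i j + h * r i) := by
          rw [hsval, Real.log_mul (mul_pos (hepos i) (hKpos i j)).ne' hqpos.ne',
            Real.log_mul (hepos i).ne' (hKpos i j).ne', hlog_e, hlog_K, hlog_q, hlam]
          field_simp
          ring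
        have := entry_ineq ((1 / 2) * C i j + h * r i) lam ε (Mstar i j) (M i j)
          hε hs (hMnn i j) hlogs
        nlinarith [this]
      have hsum_eq : ∑ i, M i j = ∑ i, Mstar i j := by rw [hMcol j, colsum j]
      have hle := Finset.sum_le_sum (s := Finset.univ) fun i _ => hper i
      have heq : ∑ i, (((1 / 2) * C i j * Mstar i j + ε * Mstar i j * Real.log (Mstar i j)
              + h * r i * Mstar i j) + (lam + ε) * (M i j - Mstar i j))
          = ∑ i, ((1 / 2) * C i j * Mstar i j + ε * Mstar i j * Real.log (Mstar i j)
              + h * r i * Mstar i j) := by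
        rw [Finset.sum_add_distrib, ← Finset.mul_sum, Finset.sum_sub_distrib, hsum_eq]
        simp
      linarith [heq ▸ hle]
  refine ⟨claim1, claim2, key3, ?_⟩
  intro ν hν
  have prod_mem : (fun i j => ν i * μ j) ∈ transportPolytope ν μ := by
    refine ⟨fun i j => mul_nonneg (hν.1 i) (hμ.1 j), fun i => ?_, fun j => ?_⟩
    · rw [← Finset.mul_sum, hμ.2, mul_one]
    · rw [← Finset.sum_mul, hν.2, one_mul]
  have hA : sInf (entropicCost ε C '' transportPolytope μplus μ) ≤ entropicCost ε C Mstar := by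
    apply csInf_le
    · refine ⟨entropicCost ε C Mstar, ?_⟩
      rintro _ ⟨M, hM, rfl⟩
      have := key3 μplus claim1 M hM
      linarith
    · exact Set.mem_image_of_mem _ claim2
  have hB : entropicCost ε C Mstar + h * ∑ i, r i * μplus i - h * ∑ i, r i * ν i
      ≤ sInf (entropicCost ε C '' transportPolytope ν μ) := by
    apply le_csInf
    · exact (Set.nonempty_of_mem prod_mem).image _
    · rintro _ ⟨M, hM, rfl⟩
      have := key3 ν hν M hM
      linarith
  linarith
end

section
/- Let N ≥ 1, let C ∈ ℝ^{N×N} have nonnegative entries, and let p, q ∈ Δ^{N−1}. Then the entropy-regularized squared Wasserstein distance converges to the squared Wasserstein distance as the regularization vanishes: lim_{ε → 0⁺} W_ε²(p,q) = W²(p,q), where W²(p,q) := min_{M ∈ Π_N(p,q)} Σ_{i,j} C_{ij} M_{ij}. -/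
open scoped BigOperators

lemma term_bound' {x p q : ℝ} (hx : 0 ≤ x) (hxp : x ≤ p) (hxq : x ≤ q)
    (hp1 : p ≤ 1) (hq1 : q ≤ 1) : |x * Real.log (x / (p * q))| ≤ 2 := by
  rcases eq_or_lt_of_le hx with h | h
  · simp [← h]
  · have hp : 0 < p := lt_of_lt_of_le h hxp
    have hq : 0 < q := lt_of_lt_of_le h hxq
    have hx1 : x ≤ 1 := hxp.trans hp1
    have hlog : Real.log (x / (p * q)) =
        Real.log x - Real.log p - Real.log q := by
      rw [Real.log_div h.ne' (by positivity), Real.log_mul hp.ne' hq.ne']; ring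
    have hlx : Real.log x ≤ 0 := Real.log_nonpos h.le hx1
    have hlp : Real.log p ≤ 0 := Real.log_nonpos hp.le hp1
    have hlq : Real.log q ≤ 0 := Real.log_nonpos hq.le hq1
    -- log x ≥ 1 - 1/x so x log x ≥ x - 1
    have h1 : Real.log x⁻¹ ≤ x⁻¹ - 1 := Real.log_le_sub_one_of_pos (by positivity)
    have h1' : x * Real.log x ≥ x - 1 := by
      rw [Real.log_inv] at h1
      have := mul_le_mul_of_nonneg_left h1 h.le
      have hxx : x * x⁻¹ = 1 := mul_inv_cancel₀ h.ne'
      nlinarith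
    -- -log p ≤ 1/p - 1, so -x log p ≤ x/p - x ≤ 1 - x ≤ 1
    have h2 : Real.log p⁻¹ ≤ p⁻¹ - 1 := Real.log_le_sub_one_of_pos (by positivity)
    have h2' : -(x * Real.log p) ≤ 1 := by
      rw [Real.log_inv] at h2
      have := mul_le_mul_of_nonneg_left h2 h.le
      have hxp' : x * p⁻¹ ≤ 1 := by
        rw [← mul_inv_cancel₀ hp.ne']
        exact mul_le_mul_of_nonneg_right hxp (by positivity)
      nlinarith
    have h3 : Real.log q⁻¹ ≤ q⁻¹ - 1 := Real.log_le_sub_one_of_pos (by positivity)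
    have h3' : -(x * Real.log q) ≤ 1 := by
      rw [Real.log_inv] at h3
      have := mul_le_mul_of_nonneg_left h3 h.le
      have hxq' : x * q⁻¹ ≤ 1 := by
        rw [← mul_inv_cancel₀ hq.ne']
        exact mul_le_mul_of_nonneg_right hxq (by positivity)
      nlinarith
    rw [hlog, abs_le]
    constructor
    · nlinarith
    · nlinarith

/-- The entropy-regularized transport cost
`Σ_{i,j} C_{ij} M_{ij} + ε Σ_{i,j} M_{ij} log(M_{ij}/(p_i q_j))`
(terms with `M_{ij} = 0` contribute `0`, as guaranteed by `Real.log 0 = 0`). -/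
noncomputable def regTransportCost {N : ℕ} (ε : ℝ)
    (C : Matrix (Fin N) (Fin N) ℝ) (p q : Fin N → ℝ)
    (M : Matrix (Fin N) (Fin N) ℝ) : ℝ :=
  (∑ i, ∑ j, C i j * M i j) +
    ε * ∑ i, ∑ j, M i j * Real.log (M i j / (p i * q j))

/-- The entropy-regularized squared Wasserstein distance
`W_ε²(p,q) := min_{M ∈ Π_N(p,q)}` of the entropy-regularized transport cost. -/
noncomputable def Wreg {N : ℕ} (ε : ℝ) (C : Matrix (Fin N) (Fin N) ℝ)
    (p q : Fin N → ℝ) : ℝ :=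
  sInf (regTransportCost ε C p q '' transportPolytope p q)

/-- **Vanishing-regularization limit.** For a cost matrix `C` with nonnegative
entries and `p, q` in the simplex, `W_ε²(p,q) → W²(p,q)` as `ε → 0⁺`, where
`W²(p,q) := min_{M ∈ Π_N(p,q)} Σ_{i,j} C_{ij} M_{ij}`. -/
theorem Wreg_tendsto_W {N : ℕ} (hN : 1 ≤ N)
    (C : Matrix (Fin N) (Fin N) ℝ) (hC : ∀ i j, 0 ≤ C i j)
    (p q : Fin N → ℝ) (hp : p ∈ stdSimplex ℝ (Fin N))
    (hq : q ∈ stdSimplex ℝ (Fin N)) :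
    Filter.Tendsto (fun ε : ℝ => Wreg ε C p q)
      (nhdsWithin 0 (Set.Ioi 0))
      (nhds (sInf ((fun M : Matrix (Fin N) (Fin N) ℝ =>
        ∑ i, ∑ j, C i j * M i j) '' transportPolytope p q))) := by
  obtain ⟨hp0, hps⟩ := hp
  obtain ⟨hq0, hqs⟩ := hq
  set cost : Matrix (Fin N) (Fin N) ℝ → ℝ :=
    fun M => ∑ i, ∑ j, C i j * M i j with hcost
  set ent : Matrix (Fin N) (Fin N) ℝ → ℝ :=
    fun M => ∑ i, ∑ j, M i j * Real.log (M i j / (p i * q j)) with hent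
  set P := transportPolytope p q with hP
  set W := sInf (cost '' P) with hW
  set B : ℝ := 2 * (N : ℝ) ^ 2 with hB
  have hBpos : 0 ≤ B := by positivity
  -- polytope nonempty
  have hne : P.Nonempty := by
    refine ⟨fun i j => p i * q j, fun i j => mul_nonneg (hp0 i) (hq0 j), ?_, ?_⟩
    · intro i; rw [← Finset.mul_sum, hqs, mul_one]
    · intro j; rw [← Finset.sum_mul, hps, one_mul]
  -- p i ≤ 1, q j ≤ 1
  have hp1 : ∀ i, p i ≤ 1 := fun i => by
    rw [← hps]
    exact Finset.single_le_sum (fun k _ => hp0 k) (Finset.mem_univ i)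
  have hq1 : ∀ j, q j ≤ 1 := fun j => by
    rw [← hqs]
    exact Finset.single_le_sum (fun k _ => hq0 k) (Finset.mem_univ j)
  -- entries of M bounded by p i and q j
  have hMle : ∀ M ∈ P, ∀ i j, M i j ≤ p i ∧ M i j ≤ q j := by
    rintro M ⟨hM0, hMr, hMc⟩ i j
    constructor
    · rw [← hMr i]
      exact Finset.single_le_sum (fun k _ => hM0 i k) (Finset.mem_univ j)
    · rw [← hMc j]
      exact Finset.single_le_sum (fun k _ => hM0 k j) (Finset.mem_univ i)
  -- cost nonneg
  have hcost0 : ∀ M ∈ P, 0 ≤ cost M := by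
    rintro M ⟨hM0, -, -⟩
    exact Finset.sum_nonneg fun i _ => Finset.sum_nonneg fun j _ =>
      mul_nonneg (hC i j) (hM0 i j)
  -- entropy bound
  have hentB : ∀ M ∈ P, |ent M| ≤ B := by
    intro M hM
    have : |ent M| ≤ ∑ i : Fin N, ∑ j : Fin N, (2 : ℝ) := by
      refine (Finset.abs_sum_le_sum_abs _ _).trans ?_
      refine Finset.sum_le_sum fun i _ => ?_
      refine (Finset.abs_sum_le_sum_abs _ _).trans ?_
      refine Finset.sum_le_sum fun j _ => ?_
      exact term_bound' (hM.1 i j) (hMle M hM i j).1 (hMle M hM i j).2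
        (hp1 i) (hq1 j)
    simpa [hB, sq, mul_comm, mul_assoc] using this
  have hreg : ∀ ε : ℝ, ∀ M, regTransportCost ε C p q M = cost M + ε * ent M :=
    fun ε M => rfl
  -- key bounds for each ε > 0
  have key : ∀ ε : ℝ, 0 < ε → |Wreg ε C p q - W| ≤ ε * B := by
    intro ε hε
    have hbddc : BddBelow (cost '' P) := by
      refine ⟨0, ?_⟩
      rintro x ⟨M, hM, rfl⟩
      exact hcost0 M hM
    have hbddr : BddBelow (regTransportCost ε C p q '' P) := by
      refine ⟨-(ε * B), ?_⟩
      rintro x ⟨M, hM, rfl⟩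
      rw [hreg]
      have := (abs_le.mp (hentB M hM)).1
      nlinarith [hcost0 M hM]
    rw [abs_sub_le_iff]
    constructor
    · -- Wreg ε ≤ W + εB
      have h1 : ∀ M ∈ P, Wreg ε C p q - ε * B ≤ cost M := by
        intro M hM
        have h2 : Wreg ε C p q ≤ regTransportCost ε C p q M :=
          csInf_le hbddr ⟨M, hM, rfl⟩
        rw [hreg] at h2
        have := (abs_le.mp (hentB M hM)).2
        nlinarith
      have := le_csInf (hne.image _) (by rintro x ⟨M, hM, rfl⟩; exact h1 M hM)
      linarith [this]
    · -- W ≤ Wreg ε + εB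
      have h1 : ∀ M ∈ P, W - ε * B ≤ regTransportCost ε C p q M := by
        intro M hM
        have h2 : W ≤ cost M := csInf_le hbddc ⟨M, hM, rfl⟩
        rw [hreg]
        have := (abs_le.mp (hentB M hM)).1
        nlinarith
      have := le_csInf (hne.image _) (by rintro x ⟨M, hM, rfl⟩; exact h1 M hM)
      have hWreg : W - ε * B ≤ Wreg ε C p q := this
      linarith
  -- squeeze
  have hlo : Filter.Tendsto (fun ε : ℝ => W - ε * B)
      (nhdsWithin 0 (Set.Ioi 0)) (nhds W) := by
    have : Filter.Tendsto (fun ε : ℝ => W - ε * B) (nhds 0) (nhds (W - 0 * B)) := by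
      exact (tendsto_const_nhds.sub ((continuous_id.mul continuous_const).tendsto 0))
    simpa using this.mono_left nhdsWithin_le_nhds
  have hhi : Filter.Tendsto (fun ε : ℝ => W + ε * B)
      (nhdsWithin 0 (Set.Ioi 0)) (nhds W) := by
    have : Filter.Tendsto (fun ε : ℝ => W + ε * B) (nhds 0) (nhds (W + 0 * B)) :=
      tendsto_const_nhds.add ((continuous_id.mul continuous_const).tendsto 0)
    simpa using this.mono_left nhdsWithin_le_nhds
  refine tendsto_of_tendsto_of_tendsto_of_le_of_le' hlo hhi ?_ ?_ <;>
  · filter_upwards [self_mem_nhdsWithin] with ε hε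
    have := abs_sub_le_iff.mp (key ε hε)
    first
      | linarith [this.2]
      | linarith [this.1]
end

section
/- The entropy-regularized squared Wasserstein distance fails the identity of indiscernibles: let x₁ ≠ x₂ be two points in ℝ^d, let C ∈ ℝ^{2×2} be the cost matrix C_{ij} := ‖x_i − x_j‖₂², let ε > 0, and let p := (1/2, 1/2) ∈ Δ¹. Then W_ε²(p, p) > 0. -/
open scoped BigOperators

lemma ent_lb (t : ℝ) (ht : 0 ≤ t) :
    t - 1/4 ≤ t * Real.log (t / (1/2 * (1/2))) := by
  rcases eq_or_lt_of_le ht with h | h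
  · simp [← h]
  · have := Real.log_le_sub_one_of_pos (x := (t / (1/2 * (1/2)))⁻¹) (by positivity)
    rw [Real.log_inv] at this
    have hlog : 1 - (t / (1/2 * (1/2)))⁻¹ ≤ Real.log (t / (1/2 * (1/2))) := by linarith
    have hinv : (t / (1/2 * (1/2)))⁻¹ = 1 / (4 * t) := by field_simp; ring
    rw [hinv] at hlog
    have h5 : t * (1 - 1/(4*t)) ≤ t * Real.log (t / (1/2 * (1/2))) :=
      mul_le_mul_of_nonneg_left hlog h.le
    have h6 : t * (1 - 1/(4*t)) = t - 1/4 := by field_simp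
    linarith

lemma ent_big (t : ℝ) (ht : 15/32 ≤ t) :
    15/32 * Real.log (15/8) ≤ t * Real.log (t / (1/2 * (1/2))) := by
  have h0 : (0:ℝ) < t := by linarith
  have harg : t / (1/2 * (1/2)) = 4 * t := by ring
  rw [harg]
  have hlog : Real.log (15/8) ≤ Real.log (4 * t) :=
    Real.log_le_log (by norm_num) (by linarith)
  exact mul_le_mul ht hlog (Real.log_nonneg (by norm_num)) h0.le

lemma log_158 : (8:ℝ)/15 < Real.log (15/8) := by
  rw [Real.lt_log_iff_exp_lt (by norm_num)]
  have h1 : Real.exp (4/15) < 15/11 := by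
    have h := Real.add_one_lt_exp (x := -(4/15:ℝ)) (by norm_num)
    have h2 : (11:ℝ)/15 < Real.exp (-(4/15)) := by linarith
    rw [Real.exp_neg] at h2
    have := Real.exp_pos (4/15 : ℝ)
    rw [lt_inv_comm₀ (by norm_num) this] at h2
    linarith [h2]
  have : Real.exp (8/15 : ℝ) = Real.exp (4/15) * Real.exp (4/15) := by
    rw [← Real.exp_add]; norm_num
  nlinarith [Real.exp_pos (4/15:ℝ)]

/-- **Failure of the identity of indiscernibles for `W_ε²`.** Let `x 0 ≠ x 1`
be two points of `ℝ^d`, let `C_{ij} := ‖x_i − x_j‖₂²`, let `ε > 0`, and let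
`p := (1/2, 1/2)`. Then `W_ε²(p,p) > 0`. -/
theorem Wreg_self_pos {d : ℕ} (x : Fin 2 → EuclideanSpace ℝ (Fin d))
    (hx : x 0 ≠ x 1)
    (C : Matrix (Fin 2) (Fin 2) ℝ) (hC : C = fun i j => ‖x i - x j‖ ^ 2)
    (ε : ℝ) (hε : 0 < ε)
    (p : Fin 2 → ℝ) (hp : p = fun _ => (1 : ℝ) / 2) :
    0 < Wreg ε C p p := by
  subst hC hp
  set a : ℝ := ‖x 0 - x 1‖ ^ 2 with ha_def
  have ha : 0 < a := by
    have h0 : x 0 - x 1 ≠ 0 := sub_ne_zero.mpr hx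
    exact pow_pos (norm_pos_iff.mpr h0) 2
  set K : ℝ := 15/16 * Real.log (15/8) - 1/2 with hK_def
  have hK : 0 < K := by
    have := log_158
    rw [hK_def]; nlinarith
  set c : ℝ := min (a/32) (ε * K) with hc_def
  have hc : 0 < c := lt_min (by positivity) (by positivity)
  have hCnn : ∀ i j : Fin 2, (0:ℝ) ≤ ‖x i - x j‖ ^ 2 := fun i j => by positivity
  refine lt_of_lt_of_le hc (le_csInf ?_ ?_)
  · exact ⟨_, ⟨fun _ _ => (1:ℝ)/4,
      ⟨fun i j => by norm_num,
       fun i => by simp [Fin.sum_univ_two]; norm_num,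
       fun j => by simp [Fin.sum_univ_two]; norm_num⟩, rfl⟩⟩
  · rintro b ⟨M, ⟨hpos, hrow, hcol⟩, rfl⟩
    have hr0 : M 0 0 + M 0 1 = 1/2 := by
      have := hrow 0; simpa [Fin.sum_univ_two] using this
    have hr1 : M 1 0 + M 1 1 = 1/2 := by
      have := hrow 1; simpa [Fin.sum_univ_two] using this
    have e00 := ent_lb (M 0 0) (hpos 0 0)
    have e01 := ent_lb (M 0 1) (hpos 0 1)
    have e10 := ent_lb (M 1 0) (hpos 1 0)
    have e11 := ent_lb (M 1 1) (hpos 1 1)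
    have hx00 : ‖x 0 - x 0‖ ^ 2 = 0 := by simp
    have hx11 : ‖x 1 - x 1‖ ^ 2 = 0 := by simp
    have hx10 : ‖x 1 - x 0‖ ^ 2 = a := by rw [ha_def, norm_sub_rev]
    have hexp : regTransportCost ε (fun i j => ‖x i - x j‖ ^ 2)
        (fun _ => (1:ℝ)/2) (fun _ => (1:ℝ)/2) M =
        a * (M 0 1 + M 1 0) +
        ε * (M 0 0 * Real.log (M 0 0 / (1/2 * (1/2)))
           + M 0 1 * Real.log (M 0 1 / (1/2 * (1/2)))
           + M 1 0 * Real.log (M 1 0 / (1/2 * (1/2)))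
           + M 1 1 * Real.log (M 1 1 / (1/2 * (1/2)))) := by
      simp only [regTransportCost, Fin.sum_univ_two, hx00, hx11, hx10]
      ring
    rw [hexp]
    by_cases hcase : 1/32 ≤ M 0 1 + M 1 0
    · -- entropy ≥ 0, transport cost ≥ a/32
      have hS2 : (0:ℝ) ≤ M 0 0 * Real.log (M 0 0 / (1/2 * (1/2)))
           + M 0 1 * Real.log (M 0 1 / (1/2 * (1/2)))
           + M 1 0 * Real.log (M 1 0 / (1/2 * (1/2)))
           + M 1 1 * Real.log (M 1 1 / (1/2 * (1/2))) := by linarith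
      have hca : c ≤ a/32 := min_le_left _ _
      have h1 : a * (1/32) ≤ a * (M 0 1 + M 1 0) :=
        mul_le_mul_of_nonneg_left hcase ha.le
      have h2 : (0:ℝ) ≤ ε * (M 0 0 * Real.log (M 0 0 / (1/2 * (1/2)))
           + M 0 1 * Real.log (M 0 1 / (1/2 * (1/2)))
           + M 1 0 * Real.log (M 1 0 / (1/2 * (1/2)))
           + M 1 1 * Real.log (M 1 1 / (1/2 * (1/2)))) := mul_nonneg hε.le hS2
      linarith
    · push_neg at hcase
      have h00 : 15/32 ≤ M 0 0 := by
        have := hpos 1 0; linarith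
      have h11 : 15/32 ≤ M 1 1 := by
        have := hpos 0 1; linarith
      have b00 := ent_big (M 0 0) h00
      have b11 := ent_big (M 1 1) h11
      have hS2 : K ≤ M 0 0 * Real.log (M 0 0 / (1/2 * (1/2)))
           + M 0 1 * Real.log (M 0 1 / (1/2 * (1/2)))
           + M 1 0 * Real.log (M 1 0 / (1/2 * (1/2)))
           + M 1 1 * Real.log (M 1 1 / (1/2 * (1/2))) := by
        have := hpos 0 1; have := hpos 1 0
        rw [hK_def]; nlinarith
      have hS1 : 0 ≤ a * (M 0 1 + M 1 0) := by
        have := hpos 0 1; have := hpos 1 0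
        have : (0:ℝ) ≤ M 0 1 + M 1 0 := by linarith
        exact mul_nonneg ha.le this
      have hcK : c ≤ ε * K := min_le_right _ _
      have h1 : ε * K ≤ ε * (M 0 0 * Real.log (M 0 0 / (1/2 * (1/2)))
           + M 0 1 * Real.log (M 0 1 / (1/2 * (1/2)))
           + M 1 0 * Real.log (M 1 0 / (1/2 * (1/2)))
           + M 1 1 * Real.log (M 1 1 / (1/2 * (1/2)))) :=
        mul_le_mul_of_nonneg_left hS2 hε.le
      exact le_trans hcK (le_trans h1 (le_add_of_nonneg_left hS1))
end

section
/- (Sinkhorn form of the optimal entropic plan.) Let N ≥ 1, ε > 0, let C ∈ ℝ^{N×N} have nonnegative entries, let K := exp(−C/(2ε)) entrywise, and let p, q ∈ Δ^{N−1} have strictly positive entries. If M* minimizes the entropic objective E_ε over the transport polytope Π_N(p,q), then M* has strictly positive entries and there exist vectors u, v ∈ ℝ^N with strictly positive entries such that M*_{ij} = u_i K_{ij} v_j for all i, j. -/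
open scoped BigOperators

/-!
Moving mass `t` around a cycle `(i,j) → (i,l) → (k,l) → (k,j)` (plus at `(i,j)`, `(k,l)`, minus
at `(i,l)`, `(k,j)`) preserves the marginals, and changes the cost with slope
`Λ i j - Λ i l - Λ k j + Λ k l`, where `Λ a b = C a b / 2 + ε (log M a b + 1)`.
If `M i j = 0`, the positive marginals give positive entries `M i l` and `M k j` to move mass
from, and as `t → 0⁺` the slope tends to `-∞` through `ε log t`: so a minimizer is positive.
Then every cycle slope vanishes at a minimizer, i.e. `Λ` is a sum `α i + β j`, and
exponentiating `C / 2 + ε log M = α i + β j - ε` gives `M = u K v`.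
-/

open Filter Topology

lemma exists_add_of_add_eq_add {ι κ G : Type*} [AddCommGroup G] (g : ι → κ → G)
    (h : ∀ i k j l, g i j + g k l = g i l + g k j) :
    ∃ (α : ι → G) (β : κ → G), ∀ i j, g i j = α i + β j := by
  rcases isEmpty_or_nonempty ι with _ | ⟨⟨i₀⟩⟩
  · exact ⟨0, 0, fun i => isEmptyElim i⟩
  rcases isEmpty_or_nonempty κ with _ | ⟨⟨j₀⟩⟩
  · exact ⟨0, 0, fun _ j => isEmptyElim j⟩
  refine ⟨fun i => g i j₀ - g i₀ j₀, fun j => g i₀ j, fun i j => ?_⟩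
  rw [sub_add_eq_add_sub, eq_sub_iff_add_eq, h i i₀ j j₀]

noncomputable def entropicTerm (ε c x : ℝ) : ℝ := 1 / 2 * c * x + ε * x * Real.log x

noncomputable def entropicTermDeriv (ε c x : ℝ) : ℝ := 1 / 2 * c + ε * (Real.log x + 1)

section EntropicTerm

variable {ε c x y : ℝ}

lemma hasDerivAt_entropicTerm (hx : x ≠ 0) :
    HasDerivAt (entropicTerm ε c) (entropicTermDeriv ε c x) x := by
  have hfun : entropicTerm ε c = fun t => 1 / 2 * c * t + ε * (t * Real.log t) := by
    funext t
    simp only [entropicTerm]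
    ring
  rw [hfun]
  exact (((hasDerivAt_id' x).const_mul (1 / 2 * c)).add
    ((Real.hasDerivAt_mul_log hx).const_mul ε)).congr_deriv (by simp [entropicTermDeriv])

/-- The tangent-line inequality of the convex function `x ↦ x log x`, taken at `y`. -/
lemma entropicTerm_sub_le (hε : 0 ≤ ε) (hx : 0 ≤ x) (hy : 0 < y) :
    entropicTerm ε c y - entropicTerm ε c x ≤ (y - x) * entropicTermDeriv ε c y := by
  have hmul_log : x * Real.log x ≥ x * Real.log y + x - y := by
    rcases hx.eq_or_lt with rfl | hx
    · simpa using hy.le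
    have h := Real.log_le_sub_one_of_pos (div_pos hy hx)
    rw [Real.log_div hy.ne' hx.ne', div_sub_one hx.ne', le_div_iff₀ hx] at h
    nlinarith
  simp only [entropicTerm, entropicTermDeriv]
  nlinarith [mul_le_mul_of_nonneg_left hmul_log hε]

lemma entropicTermDeriv_le_of_le (hε : 0 ≤ ε) (hx : 0 < x) (hxy : x ≤ y) :
    entropicTermDeriv ε c x ≤ entropicTermDeriv ε c y := by
  unfold entropicTermDeriv
  gcongr

lemma tendsto_entropicTermDeriv_nhdsGT_zero (hε : 0 < ε) :
    Tendsto (entropicTermDeriv ε c) (𝓝[>] 0) atBot := by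
  have h := ((Real.tendsto_log_nhdsGT_zero.atBot_add tendsto_const_nhds (C := 1)).const_mul_atBot
    hε).atBot_add tendsto_const_nhds (C := 1 / 2 * c)
  exact h.congr fun t => by simp only [entropicTermDeriv]; ring

end EntropicTerm

section CycleDir

variable {ι : Type*} [DecidableEq ι]

def cycleDir (i k j l : ι) : Matrix ι ι ℝ :=
  Matrix.vecMulVec (Pi.single i 1 - Pi.single k 1) (Pi.single j 1 - Pi.single l 1)

lemma cycleDir_apply_neg_imp {i k j l a b : ι} (h : cycleDir i k j l a b < 0) :
    (a = i ∧ b = l) ∨ (a = k ∧ b = j) := by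
  simp only [cycleDir, Matrix.vecMulVec_apply, Pi.sub_apply, Pi.single_apply] at h
  split_ifs at h <;> norm_num at h <;> simp_all

variable [Fintype ι]

lemma sum_pi_single_sub_pi_single (i k : ι) :
    ∑ a, (Pi.single i 1 - Pi.single k 1 : ι → ℝ) a = 0 := by
  simp [Finset.sum_sub_distrib]

lemma sum_cycleDir_row (i k j l a : ι) : ∑ b, cycleDir i k j l a b = 0 := by
  simp only [cycleDir, Matrix.vecMulVec_apply, ← Finset.mul_sum, sum_pi_single_sub_pi_single,
    mul_zero]

lemma sum_cycleDir_col (i k j l b : ι) : ∑ a, cycleDir i k j l a b = 0 := by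
  simp only [cycleDir, Matrix.vecMulVec_apply, ← Finset.sum_mul, sum_pi_single_sub_pi_single,
    zero_mul]

lemma sum_cycleDir_mul (i k j l : ι) (g : Matrix ι ι ℝ) :
    ∑ a, ∑ b, cycleDir i k j l a b * g a b = g i j - g i l - g k j + g k l := by
  simp only [cycleDir, Matrix.vecMulVec_apply, Pi.sub_apply, sub_mul, mul_sub,
    Finset.sum_sub_distrib, Pi.single_apply, ite_mul, one_mul, zero_mul, Finset.sum_ite_eq',
    Finset.mem_univ, if_true, mul_ite, mul_one, mul_zero]
  ring

end CycleDir

lemma add_smul_cycleDir_mem_transportPolytope {N : ℕ} {p q : Fin N → ℝ}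
    {M : Matrix (Fin N) (Fin N) ℝ} (hM : M ∈ transportPolytope p q) {i k j l : Fin N} {t : ℝ}
    (hnonneg : ∀ a b, 0 ≤ M a b + t * cycleDir i k j l a b) :
    M + t • cycleDir i k j l ∈ transportPolytope p q := by
  obtain ⟨-, hrow, hcol⟩ := hM
  refine ⟨hnonneg, fun a => ?_, fun b => ?_⟩
  · simp [Finset.sum_add_distrib, ← Finset.mul_sum, sum_cycleDir_row, hrow]
  · simp [Finset.sum_add_distrib, ← Finset.mul_sum, sum_cycleDir_col, hcol]

section EntropicCost

variable {N : ℕ} {ε : ℝ} {C M D : Matrix (Fin N) (Fin N) ℝ}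

lemma entropicCost_eq_sum :
    entropicCost ε C M = ∑ a, ∑ b, entropicTerm ε (C a b) (M a b) := rfl

lemma entropicCost_add_smul_sub_le (hε : 0 ≤ ε) (hM : ∀ a b, 0 ≤ M a b) {t : ℝ}
    (hpos : ∀ a b, D a b ≠ 0 → 0 < M a b + t * D a b) :
    entropicCost ε C (M + t • D) - entropicCost ε C M ≤
      t * ∑ a, ∑ b, D a b * entropicTermDeriv ε (C a b) (M a b + t * D a b) := by
  rw [entropicCost_eq_sum, entropicCost_eq_sum, ← Finset.sum_sub_distrib, Finset.mul_sum]
  refine Finset.sum_le_sum fun a _ => ?_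
  rw [← Finset.sum_sub_distrib, Finset.mul_sum]
  refine Finset.sum_le_sum fun b _ => ?_
  simp only [Matrix.add_apply, Matrix.smul_apply, smul_eq_mul]
  by_cases hD : D a b = 0
  · simp [hD]
  · have h := entropicTerm_sub_le (c := C a b) hε (hM a b) (hpos a b hD)
    rw [add_sub_cancel_left] at h
    linarith

lemma hasDerivAt_entropicCost_add_smul (hM : ∀ a b, 0 < M a b) :
    HasDerivAt (fun t : ℝ => entropicCost ε C (M + t • D))
      (∑ a, ∑ b, D a b * entropicTermDeriv ε (C a b) (M a b)) 0 := by
  simp only [entropicCost_eq_sum, Matrix.add_apply, Matrix.smul_apply, smul_eq_mul]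
  refine HasDerivAt.fun_sum fun a _ => HasDerivAt.fun_sum fun b _ => ?_
  have hline : HasDerivAt (fun t => M a b + t * D a b) (D a b) 0 := by
    simpa using ((hasDerivAt_id' (0 : ℝ)).mul_const (D a b)).const_add (M a b)
  rw [mul_comm]
  exact (hasDerivAt_entropicTerm (hM a b).ne').comp_of_eq 0 hline (by simp)

end EntropicCost

lemma eventually_entropicTermDeriv_cycle_neg {ε : ℝ} (hε : 0 < ε) {a b c : ℝ} (ha : 0 < a)
    (hb : 0 < b) (hc : 0 ≤ c) (c₁ c₂ c₃ c₄ : ℝ) :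
    ∀ᶠ t in 𝓝[>] 0, entropicTermDeriv ε c₁ t - entropicTermDeriv ε c₂ (a - t)
      - entropicTermDeriv ε c₃ (b - t) + entropicTermDeriv ε c₄ (c + t) < 0 := by
  have hsmall : Set.Ioo 0 (min (min (a / 2) (b / 2)) 1) ∈ 𝓝[>] (0 : ℝ) :=
    Ioo_mem_nhdsGT (by positivity)
  filter_upwards [hsmall, (tendsto_entropicTermDeriv_nhdsGT_zero (c := c₁) hε).eventually_lt_atBot
    (entropicTermDeriv ε c₂ (a / 2) + entropicTermDeriv ε c₃ (b / 2)
      - entropicTermDeriv ε c₄ (c + 1))] with t ⟨ht, ht'⟩ hlt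
  simp only [lt_min_iff] at ht'
  have h₂ := entropicTermDeriv_le_of_le (c := c₂) hε.le (half_pos ha) (by linarith : a / 2 ≤ a - t)
  have h₃ := entropicTermDeriv_le_of_le (c := c₃) hε.le (half_pos hb) (by linarith : b / 2 ≤ b - t)
  have h₄ := entropicTermDeriv_le_of_le (c := c₄) hε.le (by linarith) (by linarith : c + t ≤ c + 1)
  linarith

section Minimizer

variable {N : ℕ} {ε : ℝ} {C M : Matrix (Fin N) (Fin N) ℝ} {p q : Fin N → ℝ}

lemma pos_of_isMinOn_entropicCost (hε : 0 < ε) (hp : ∀ i, 0 < p i) (hq : ∀ j, 0 < q j)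
    (hM : M ∈ transportPolytope p q)
    (hmin : IsMinOn (entropicCost ε C) (transportPolytope p q) M) (i j : Fin N) :
    0 < M i j := by
  obtain ⟨hnonneg, hrow, hcol⟩ := hM
  refine (hnonneg i j).lt_of_ne' fun hij => ?_
  obtain ⟨l, -, hl⟩ : ∃ l ∈ Finset.univ, (0 : ℝ) < M i l :=
    Finset.exists_lt_of_sum_lt (by rw [Finset.sum_const_zero, hrow]; exact hp i)
  obtain ⟨k, -, hk⟩ : ∃ k ∈ Finset.univ, (0 : ℝ) < M k j :=
    Finset.exists_lt_of_sum_lt (by rw [Finset.sum_const_zero, hcol]; exact hq j)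
  have hjl : j ≠ l := by rintro rfl; linarith
  have hik : i ≠ k := by rintro rfl; linarith
  obtain ⟨t, hcycle, ht, htlk⟩ := ((eventually_entropicTermDeriv_cycle_neg hε hl hk
    (hnonneg k l) (C i j) (C i l) (C k j) (C k l)).and (Ioo_mem_nhdsGT (lt_min hl hk))).exists
  obtain ⟨htl, htk⟩ := lt_min_iff.1 htlk
  set D := cycleDir i k j l
  have hcorner : D i j = 1 ∧ D i l = -1 ∧ D k j = -1 ∧ D k l = 1 := by
    simp [D, cycleDir, Matrix.vecMulVec_apply, hik, hjl, hik.symm, hjl.symm]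
  have hpos : ∀ a b, D a b ≠ 0 → 0 < M a b + t * D a b := by
    intro a b hab
    rcases hab.lt_or_gt with hneg | hpos
    · rcases cycleDir_apply_neg_imp hneg with ⟨rfl, rfl⟩ | ⟨rfl, rfl⟩
      · rw [hcorner.2.1]; linarith
      · rw [hcorner.2.2.1]; linarith
    · exact add_pos_of_nonneg_of_pos (hnonneg a b) (mul_pos ht hpos)
  have hdecrease := entropicCost_add_smul_sub_le (C := C) hε.le hnonneg hpos
  rw [sum_cycleDir_mul i k j l fun a b => entropicTermDeriv ε (C a b) (M a b + t * D a b),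
    hcorner.1, hcorner.2.1, hcorner.2.2.1, hcorner.2.2.2, hij] at hdecrease
  simp only [zero_add, mul_one, mul_neg_one, ← sub_eq_add_neg] at hdecrease
  have hnonneg' : ∀ a b, 0 ≤ M a b + t * D a b := fun a b => by
    by_cases hD : D a b = 0
    · rw [hD, mul_zero, add_zero]
      exact hnonneg a b
    · exact (hpos a b hD).le
  have hge := isMinOn_iff.1 hmin _
    (add_smul_cycleDir_mem_transportPolytope ⟨hnonneg, hrow, hcol⟩ hnonneg')
  nlinarith [mul_neg_of_pos_of_neg ht hcycle]

lemma entropicTermDeriv_cycle_eq (hM : M ∈ transportPolytope p q)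
    (hmin : IsMinOn (entropicCost ε C) (transportPolytope p q) M) (hpos : ∀ a b, 0 < M a b)
    (i k j l : Fin N) :
    entropicTermDeriv ε (C i j) (M i j) + entropicTermDeriv ε (C k l) (M k l) =
      entropicTermDeriv ε (C i l) (M i l) + entropicTermDeriv ε (C k j) (M k j) := by
  have hloc : IsLocalMin (fun t : ℝ => entropicCost ε C (M + t • cycleDir i k j l)) 0 := by
    have hentry : ∀ a b, ∀ᶠ t in 𝓝 (0 : ℝ), 0 < M a b + t * cycleDir i k j l a b := fun a b =>
      ((continuous_const.add (continuous_id.mul continuous_const)).tendsto' 0 (M a b)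
        (by simp)).eventually_const_lt (hpos a b)
    filter_upwards [eventually_all.2 fun a => eventually_all.2 (hentry a)] with t ht
    simpa using isMinOn_iff.1 hmin _
      (add_smul_cycleDir_mem_transportPolytope hM fun a b => (ht a b).le)
  have hderiv := hloc.hasDerivAt_eq_zero (hasDerivAt_entropicCost_add_smul hpos)
  rw [sum_cycleDir_mul i k j l fun a b => entropicTermDeriv ε (C a b) (M a b)] at hderiv
  linarith

end Minimizer

theorem entropic_minimizer_sinkhorn_form_general {N : ℕ}
    (ε : ℝ) (hε : 0 < ε) (C : Matrix (Fin N) (Fin N) ℝ)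
    (K : Matrix (Fin N) (Fin N) ℝ)
    (hK : K = fun i j => Real.exp (-C i j / (2 * ε)))
    (p q : Fin N → ℝ)
    (hppos : ∀ i, 0 < p i) (hqpos : ∀ j, 0 < q j)
    (Mstar : Matrix (Fin N) (Fin N) ℝ)
    (hfeas : Mstar ∈ transportPolytope p q)
    (hmin : ∀ M ∈ transportPolytope p q,
      entropicCost ε C Mstar ≤ entropicCost ε C M) :
    (∀ i j, 0 < Mstar i j) ∧
    ∃ u v : Fin N → ℝ, (∀ i, 0 < u i) ∧ (∀ j, 0 < v j) ∧
      ∀ i j, Mstar i j = u i * K i j * v j := by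
  have hmin' : IsMinOn (entropicCost ε C) (transportPolytope p q) Mstar := isMinOn_iff.2 hmin
  have hpos := pos_of_isMinOn_entropicCost hε hppos hqpos hfeas hmin'
  obtain ⟨α, β, hαβ⟩ := exists_add_of_add_eq_add _
    (entropicTermDeriv_cycle_eq hfeas hmin' hpos)
  refine ⟨hpos, fun i => Real.exp (α i / ε - 1), fun j => Real.exp (β j / ε),
    fun i => Real.exp_pos _, fun j => Real.exp_pos _, fun i j => ?_⟩
  have hlog : Real.log (Mstar i j) = α i / ε - 1 + -C i j / (2 * ε) + β j / ε := by
    have h := hαβ i j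
    simp only [entropicTermDeriv] at h
    field_simp
    linarith
  rw [hK, ← Real.exp_add, ← Real.exp_add, ← hlog, Real.exp_log (hpos i j)]

/-- **Sinkhorn form of the optimal entropic plan.** Let `ε > 0`, let `C` have
nonnegative entries, `K := exp(−C/(2ε))` entrywise, and let `p, q` in the
simplex have strictly positive entries. If `M*` minimizes `E_ε` over
`Π_N(p,q)`, then `M*` has strictly positive entries and there exist strictly
positive vectors `u, v` with `M*_{ij} = u_i K_{ij} v_j` for all `i, j`. -/
theorem entropic_minimizer_sinkhorn_form {N : ℕ} (hN : 1 ≤ N)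
    (ε : ℝ) (hε : 0 < ε) (C : Matrix (Fin N) (Fin N) ℝ)
    (hC : ∀ i j, 0 ≤ C i j)
    (K : Matrix (Fin N) (Fin N) ℝ)
    (hK : K = fun i j => Real.exp (-C i j / (2 * ε)))
    (p q : Fin N → ℝ) (hp : p ∈ stdSimplex ℝ (Fin N))
    (hq : q ∈ stdSimplex ℝ (Fin N))
    (hppos : ∀ i, 0 < p i) (hqpos : ∀ j, 0 < q j)
    (Mstar : Matrix (Fin N) (Fin N) ℝ)
    (hfeas : Mstar ∈ transportPolytope p q)
    (hmin : ∀ M ∈ transportPolytope p q,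
      entropicCost ε C Mstar ≤ entropicCost ε C M) :
    (∀ i j, 0 < Mstar i j) ∧
    ∃ u v : Fin N → ℝ, (∀ i, 0 < u i) ∧ (∀ j, 0 < v j) ∧
      ∀ i j, Mstar i j = u i * K i j * v j :=
  entropic_minimizer_sinkhorn_form_general ε hε C K hK p q hppos hqpos Mstar hfeas hmin
end
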